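/- arXiv:2601.12949 — 2 statements merged into one kernel-verified Lean document; each statement's English description precedes it below -/
import Mathlib

section
/- Let γ ∈ ℝ, let a_x, a_y : ℝ → ℝ be C¹ functions, let w : ℝ² → ℝ be C³, and let ψ_H : ℝ × ℝ² → ℝ be C². Define the completed potential components A_u(u,p) = γ·(a_x'(u)·∂_x w(p) + a_y'(u)·∂_y w(p)), and A_i(u,p) = a_i(u) + γ·∂_i[a_x(u)·∂_x w(p) + a_y(u)·∂_y w(p) + ψ_H(u,p)] for i ∈ {x,y}. Then (i) the transverse field component vanishes: F_xy := ∂_x A_y − ∂_y A_x = 0 identically; and (ii) the radiative components satisfy the cancellation F_{ui} := ∂_u A_i − ∂_i A_u = a_i'(u) + γ·∂_i(∂_u ψ_H)(u,p) for all (u,p), i.e. all dependence on w cancels from F_{ui}. -/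
noncomputable section

/-- Partial derivative in the first transverse coordinate `x`. -/
def pderivX (g : ℝ × ℝ → ℝ) (p : ℝ × ℝ) : ℝ :=
  deriv (fun t => g (t, p.2)) p.1

/-- Partial derivative in the second transverse coordinate `y`. -/
def pderivY (g : ℝ × ℝ → ℝ) (p : ℝ × ℝ) : ℝ :=
  deriv (fun t => g (p.1, t)) p.2

/-- The completed `u`-component of the potential:
`A_u(u,p) = γ (a_x'(u) ∂_x w(p) + a_y'(u) ∂_y w(p))`. -/
def Acompu (γ : ℝ) (ax ay : ℝ → ℝ) (w : ℝ × ℝ → ℝ) (u : ℝ) (p : ℝ × ℝ) : ℝ :=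
  γ * (deriv ax u * pderivX w p + deriv ay u * pderivY w p)

/-- The completion scalar `Ψ(u,p) = a_x(u) ∂_x w(p) + a_y(u) ∂_y w(p) + ψ_H(u,p)`. -/
def Ψc (ax ay : ℝ → ℝ) (w : ℝ × ℝ → ℝ) (ψH : ℝ → ℝ × ℝ → ℝ) (u : ℝ) (p : ℝ × ℝ) : ℝ :=
  ax u * pderivX w p + ay u * pderivY w p + ψH u p

/-- `A_x(u,p) = a_x(u) + γ ∂_x Ψ(u,p)`. -/
def Acompx (γ : ℝ) (ax ay : ℝ → ℝ) (w : ℝ × ℝ → ℝ) (ψH : ℝ → ℝ × ℝ → ℝ)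
    (u : ℝ) (p : ℝ × ℝ) : ℝ :=
  ax u + γ * pderivX (Ψc ax ay w ψH u) p

/-- `A_y(u,p) = a_y(u) + γ ∂_y Ψ(u,p)`. -/
def Acompy (γ : ℝ) (ax ay : ℝ → ℝ) (w : ℝ × ℝ → ℝ) (ψH : ℝ → ℝ × ℝ → ℝ)
    (u : ℝ) (p : ℝ × ℝ) : ℝ :=
  ay u + γ * pderivY (Ψc ax ay w ψH u) p

/-! Every partial derivative in the statement is a line derivative: `pderivX g p` is
`lineDeriv ℝ g p (1, 0)` for every `g`, differentiable or not, and likewise for `∂_y` and `∂_u`.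
`F_xy` is then the curl of a constant plus `γ` times a gradient, which vanishes by symmetry of the
Hessian of `Ψ` (a `C²` function, since `w` is `C³`). In `F_ui` the `w`-terms
`γ (a_x' ∂_i ∂_x w + a_y' ∂_i ∂_y w)` occur identically in `∂_u A_i` and in `∂_i A_u`, and the
remaining `∂_u ∂_i ψ_H` equals `∂_i ∂_u ψ_H`, again by symmetry of second derivatives. -/

section LineDeriv

variable {𝕜 : Type*} [NontriviallyNormedField 𝕜]
  {E F G : Type*} [NormedAddCommGroup E] [NormedSpace 𝕜 E] [NormedAddCommGroup F]
  [NormedSpace 𝕜 F] [NormedAddCommGroup G] [NormedSpace 𝕜 G]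

theorem lineDeriv_add {f g : E → F} {x v : E} (hf : LineDifferentiableAt 𝕜 f x v)
    (hg : LineDifferentiableAt 𝕜 g x v) :
    lineDeriv 𝕜 (fun y => f y + g y) x v = lineDeriv 𝕜 f x v + lineDeriv 𝕜 g x v :=
  deriv_add hf hg

theorem lineDeriv_const_add (c : F) (f : E → F) (x v : E) :
    lineDeriv 𝕜 (fun y => c + f y) x v = lineDeriv 𝕜 f x v :=
  deriv_const_add c

theorem lineDeriv_const_mul (c : 𝕜) (f : E → 𝕜) (x v : E) :
    lineDeriv 𝕜 (fun y => c * f y) x v = c * lineDeriv 𝕜 f x v :=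
  deriv_const_mul_field c

theorem deriv_comp_prodMk_left (H : 𝕜 × E → G) (u : 𝕜) (e : E) :
    deriv (fun t => H (t, e)) u = lineDeriv 𝕜 H (u, e) (1, 0) := by
  simp [lineDeriv, deriv_comp_const_add (fun t => H (t, e))]

theorem deriv_comp_prodMk_right (H : E × 𝕜 → G) (e : E) (u : 𝕜) :
    deriv (fun t => H (e, t)) u = lineDeriv 𝕜 H (e, u) (0, 1) := by
  simp [lineDeriv, deriv_comp_const_add (fun t => H (e, t))]

theorem lineDeriv_comp_prodMk_right (H : E × F → G) (e : E) (y v : F) :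
    lineDeriv 𝕜 (fun z => H (e, z)) y v = lineDeriv 𝕜 H (e, y) (0, v) := by
  simp [lineDeriv]

theorem Differentiable.lineDeriv_eq_fderiv {f : E → F} (hf : Differentiable 𝕜 f) (v : E) :
    (fun x => lineDeriv 𝕜 f x v) = fun x => fderiv 𝕜 f x v :=
  funext fun x => (hf x).lineDeriv_eq_fderiv

theorem ContDiff.lineDeriv {f : E → F} {m n : WithTop ℕ∞} (hf : ContDiff 𝕜 n f)
    (hmn : m + 1 ≤ n) (v : E) : ContDiff 𝕜 m (fun x => lineDeriv 𝕜 f x v) := by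
  have hn : n ≠ 0 := by
    rintro rfl
    simp at hmn
  rw [(hf.differentiable hn).lineDeriv_eq_fderiv]
  exact (hf.fderiv_right hmn).clm_apply contDiff_const

end LineDeriv

section SecondLineDeriv

variable {E F : Type*} [NormedAddCommGroup E] [NormedSpace ℝ E] [NormedAddCommGroup F]
  [NormedSpace ℝ F]

theorem lineDeriv_lineDeriv_comm {f : E → F} (hf : ContDiff ℝ 2 f) (x v w : E) :
    lineDeriv ℝ (fun y => lineDeriv ℝ f y v) x w
      = lineDeriv ℝ (fun y => lineDeriv ℝ f y w) x v := by
  have hf' : Differentiable ℝ f := hf.differentiable two_ne_zero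
  have hf'' : Differentiable ℝ (fderiv ℝ f) :=
    (hf.fderiv_right le_rfl).differentiable one_ne_zero
  rw [hf'.lineDeriv_eq_fderiv, hf'.lineDeriv_eq_fderiv,
    ((hf'' x).clm_apply (differentiableAt_const v)).lineDeriv_eq_fderiv,
    ((hf'' x).clm_apply (differentiableAt_const w)).lineDeriv_eq_fderiv,
    fderiv_clm_apply (hf'' x) (differentiableAt_const v),
    fderiv_clm_apply (hf'' x) (differentiableAt_const w)]
  simpa using (hf.contDiffAt.isSymmSndFDerivAt (by simp)) w v

theorem deriv_lineDeriv_comm {H : ℝ × E → F} (hH : ContDiff ℝ 2 H) (u : ℝ) (p v : E) :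
    deriv (fun t => lineDeriv ℝ (fun q => H (t, q)) p v) u
      = lineDeriv ℝ (fun q => deriv (fun t => H (t, q)) u) p v := by
  simp only [lineDeriv_comp_prodMk_right, deriv_comp_prodMk_left]
  rw [deriv_comp_prodMk_left (fun z => lineDeriv ℝ H z (0, v)),
    lineDeriv_comp_prodMk_right (fun z => lineDeriv ℝ H z (1, 0))]
  exact lineDeriv_lineDeriv_comm hH _ _ _

/- `D` stands for `pderivX` or `pderivY`, which agree with `lineDeriv` only propositionally;
quantifying over such a `D` lets the lemmas below match `Acompx`, `Acompy`, `Acompu` by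
unfolding. -/
theorem dirDeriv_const_add_mul_dirDeriv_comm {D D' : (E → ℝ) → E → ℝ} {v v' : E}
    (hD : ∀ g q, D g q = lineDeriv ℝ g q v) (hD' : ∀ g q, D' g q = lineDeriv ℝ g q v')
    {g : E → ℝ} (hg : ContDiff ℝ 2 g) (c c' γ : ℝ) (p : E) :
    D (fun q => c' + γ * D' g q) p = D' (fun q => c + γ * D g q) p := by
  simp only [hD, hD']
  rw [lineDeriv_const_add, lineDeriv_const_add, lineDeriv_const_mul, lineDeriv_const_mul,
    lineDeriv_lineDeriv_comm hg]

end SecondLineDeriv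

theorem pderivX_eq_lineDeriv (g : ℝ × ℝ → ℝ) (p : ℝ × ℝ) :
    pderivX g p = lineDeriv ℝ g p (1, 0) :=
  deriv_comp_prodMk_left g p.1 p.2

theorem pderivY_eq_lineDeriv (g : ℝ × ℝ → ℝ) (p : ℝ × ℝ) :
    pderivY g p = lineDeriv ℝ g p (0, 1) :=
  deriv_comp_prodMk_right g p.1 p.2

theorem ContDiff.pderivX {g : ℝ × ℝ → ℝ} {m n : WithTop ℕ∞} (hg : ContDiff ℝ n g)
    (hmn : m + 1 ≤ n) : ContDiff ℝ m (pderivX g) := by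
  rw [funext (pderivX_eq_lineDeriv g)]
  exact hg.lineDeriv hmn (1, 0)

theorem ContDiff.pderivY {g : ℝ × ℝ → ℝ} {m n : WithTop ℕ∞} (hg : ContDiff ℝ n g)
    (hmn : m + 1 ≤ n) : ContDiff ℝ m (pderivY g) := by
  rw [funext (pderivY_eq_lineDeriv g)]
  exact hg.lineDeriv hmn (0, 1)

theorem deriv_sub_dirDeriv_Acompu {D : (ℝ × ℝ → ℝ) → ℝ × ℝ → ℝ} {v : ℝ × ℝ}
    (hD : ∀ g q, D g q = lineDeriv ℝ g q v) {γ : ℝ}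
    {ax ay c : ℝ → ℝ} {w : ℝ × ℝ → ℝ} {ψH : ℝ → ℝ × ℝ → ℝ} {u : ℝ} {p : ℝ × ℝ}
    (hc : DifferentiableAt ℝ c u) (hax : DifferentiableAt ℝ ax u)
    (hay : DifferentiableAt ℝ ay u) (hwx : DifferentiableAt ℝ (pderivX w) p)
    (hwy : DifferentiableAt ℝ (pderivY w) p)
    (hψ : ContDiff ℝ 2 (fun q : ℝ × (ℝ × ℝ) => ψH q.1 q.2)) :
    deriv (fun t => c t + γ * D (Ψc ax ay w ψH t) p) u - D (Acompu γ ax ay w u) p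
      = deriv c u + γ * D (fun q => deriv (fun t => ψH t q) u) p := by
  simp only [hD]
  set X := lineDeriv ℝ (pderivX w) p v
  set Y := lineDeriv ℝ (pderivY w) p v
  have hψt : ∀ t, DifferentiableAt ℝ (ψH t) p := fun t =>
    (hψ.comp (contDiff_const.prodMk contDiff_id)).differentiable two_ne_zero p
  have hΨc : ∀ t, lineDeriv ℝ (Ψc ax ay w ψH t) p v
      = ax t * X + ay t * Y + lineDeriv ℝ (ψH t) p v := by
    intro t
    unfold Ψc
    rw [lineDeriv_add, lineDeriv_add, lineDeriv_const_mul, lineDeriv_const_mul]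
    all_goals exact DifferentiableAt.lineDifferentiableAt (by fun_prop)
  have hAu : lineDeriv ℝ (Acompu γ ax ay w u) p v
      = γ * (deriv ax u * X + deriv ay u * Y) := by
    unfold Acompu
    rw [lineDeriv_const_mul, lineDeriv_add, lineDeriv_const_mul, lineDeriv_const_mul]
    all_goals exact DifferentiableAt.lineDifferentiableAt (by fun_prop)
  have hψu : HasDerivAt (fun t => lineDeriv ℝ (ψH t) p v)
      (lineDeriv ℝ (fun q => deriv (fun t => ψH t q) u) p v) u := by
    rw [← deriv_lineDeriv_comm hψ]
    refine hasDerivAt_deriv_iff.2 ?_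
    have hslice : (fun t => lineDeriv ℝ (ψH t) p v)
        = fun t => lineDeriv ℝ (fun q : ℝ × (ℝ × ℝ) => ψH q.1 q.2) (t, p) (0, v) :=
      funext fun t =>
        lineDeriv_comp_prodMk_right (fun q : ℝ × (ℝ × ℝ) => ψH q.1 q.2) t p v
    rw [hslice]
    exact ((hψ.lineDeriv le_rfl (0, v)).differentiable one_ne_zero).comp (by fun_prop) u
  simp only [hΨc, hAu]
  rw [(hc.hasDerivAt.fun_add ((((hax.hasDerivAt.mul_const X).fun_add
    (hay.hasDerivAt.mul_const Y)).fun_add hψu).const_mul γ)).deriv]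
  ring

/-- Parts (1)–(2) of the gauge-completion theorem: `F_xy = 0` identically, and
`F_{ui} = ∂_u A_i − ∂_i A_u = a_i'(u) + γ ∂_i ∂_u ψ_H(u,p)`: all dependence on `w` cancels. -/
theorem gauge_completion_Fxy_zero_and_Fui_cancellation
    (γ : ℝ) (ax ay : ℝ → ℝ) (w : ℝ × ℝ → ℝ) (ψH : ℝ → ℝ × ℝ → ℝ)
    (hax : ContDiff ℝ 1 ax) (hay : ContDiff ℝ 1 ay)
    (hw : ContDiff ℝ 3 w)
    (hψ : ContDiff ℝ 2 (fun q : ℝ × (ℝ × ℝ) => ψH q.1 q.2)) :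
    (∀ u p, pderivX (Acompy γ ax ay w ψH u) p - pderivY (Acompx γ ax ay w ψH u) p = 0)
    ∧
    (∀ u p,
      (deriv (fun t => Acompx γ ax ay w ψH t p) u - pderivX (Acompu γ ax ay w u) p
        = deriv ax u + γ * pderivX (fun q => deriv (fun t => ψH t q) u) p)
      ∧
      (deriv (fun t => Acompy γ ax ay w ψH t p) u - pderivY (Acompu γ ax ay w u) p
        = deriv ay u + γ * pderivY (fun q => deriv (fun t => ψH t q) u) p)) := by
  have hwx : ContDiff ℝ 2 (pderivX w) := hw.pderivX (by norm_num)
  have hwy : ContDiff ℝ 2 (pderivY w) := hw.pderivY (by norm_num)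
  have hΨc : ∀ u, ContDiff ℝ 2 (Ψc ax ay w ψH u) := fun u =>
    ((contDiff_const.mul hwx).add (contDiff_const.mul hwy)).add
      (hψ.comp (contDiff_const.prodMk contDiff_id))
  have hax' := hax.differentiable one_ne_zero
  have hay' := hay.differentiable one_ne_zero
  have hwx' := hwx.differentiable two_ne_zero
  have hwy' := hwy.differentiable two_ne_zero
  refine ⟨fun u p => sub_eq_zero.2 ?_, fun u p => ⟨?_, ?_⟩⟩
  · exact dirDeriv_const_add_mul_dirDeriv_comm pderivX_eq_lineDeriv pderivY_eq_lineDeriv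
      (hΨc u) _ _ _ p
  · exact deriv_sub_dirDeriv_Acompu pderivX_eq_lineDeriv (hax' u) (hax' u) (hay' u)
      (hwx' p) (hwy' p) hψ
  · exact deriv_sub_dirDeriv_Acompu pderivY_eq_lineDeriv (hay' u) (hax' u) (hay' u)
      (hwx' p) (hwy' p) hψ

end
end

section
/- For ψ, χ ∈ ℝ and σ ∈ {−1, +1}, with â'(θ) ∈ ℝ² given by â'_x(θ) = √2·(−cos χ sin θ cos ψ − σ sin χ cos θ sin ψ) and â'_y(θ) = √2·(−cos χ sin θ sin ψ + σ sin χ cos θ cos ψ), the cycle-averaged dyadic equals the polarization projector: (1/(2π)) ∫₀^{2π} â'(θ) â'(θ)ᵀ dθ = (1/2)·[I₂ + cos 2χ · M(ψ)], where M(ψ) is the 2×2 matrix with entries M₁₁ = cos 2ψ, M₁₂ = M₂₁ = sin 2ψ, M₂₂ = −cos 2ψ. In particular the result is independent of the handedness σ. -/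
noncomputable section

open Real Matrix

/-- `x`-component of the normalized polarization-derivative vector `â'(θ)`. -/
def ahatX (ψ χ σ θ : ℝ) : ℝ :=
  Real.sqrt 2 * (-(cos χ * sin θ * cos ψ) - σ * sin χ * cos θ * sin ψ)

/-- `y`-component of the normalized polarization-derivative vector `â'(θ)`. -/
def ahatY (ψ χ σ θ : ℝ) : ℝ :=
  Real.sqrt 2 * (-(cos χ * sin θ * sin ψ) + σ * sin χ * cos θ * cos ψ)

/-- The vector `â'(θ) ∈ ℝ²`. -/
def ahat (ψ χ σ θ : ℝ) : Fin 2 → ℝ := ![ahatX ψ χ σ θ, ahatY ψ χ σ θ]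

/-- The matrix `M(ψ)` with entries `cos 2ψ, sin 2ψ; sin 2ψ, −cos 2ψ`. -/
def Mpol (ψ : ℝ) : Matrix (Fin 2) (Fin 2) ℝ :=
  !![cos (2 * ψ), sin (2 * ψ); sin (2 * ψ), -cos (2 * ψ)]

/-!
Write `e = (cos ψ, sin ψ)` and `e⊥ = (-sin ψ, cos ψ)`. Then
`â'(θ) = √2 (sin θ · u + cos θ · v)` with `u = -cos χ · e` and `v = σ sin χ · e⊥`. Over a period
`sin²` and `cos²` average to `½` and `sin · cos` to `0`, so the averaged dyadic is
`u uᵀ + v vᵀ = cos²χ · e eᵀ + σ² sin²χ · e⊥ e⊥ᵀ`. Since `e eᵀ = ½ (I + M(ψ))`,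
`e⊥ e⊥ᵀ = ½ (I - M(ψ))` and `σ² = 1`, this is `½ (I + (cos²χ - sin²χ) M(ψ))`.
-/

theorem integral_sin_add_cos_mul_sin_add_cos (a b c d : ℝ) :
    ∫ θ in (0:ℝ)..2 * π, (a * sin θ + b * cos θ) * (c * sin θ + d * cos θ)
      = π * (a * c + b * d) := by
  have hcont {f : ℝ → ℝ} (hf : Continuous f) :
      IntervalIntegrable f MeasureTheory.volume 0 (2 * π) :=
    hf.intervalIntegrable _ _
  have hexpand : ∀ θ : ℝ, (a * sin θ + b * cos θ) * (c * sin θ + d * cos θ)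
      = a * c * sin θ ^ 2 + ((a * d + b * c) * (sin θ * cos θ) + b * d * cos θ ^ 2) := by
    intro θ; ring
  simp_rw [hexpand]
  rw [intervalIntegral.integral_add (hcont (by fun_prop)) (hcont (by fun_prop)),
    intervalIntegral.integral_add (hcont (by fun_prop)) (hcont (by fun_prop)),
    intervalIntegral.integral_const_mul, intervalIntegral.integral_const_mul,
    intervalIntegral.integral_const_mul, integral_sin_sq, integral_sin_mul_cos₁, integral_cos_sq]
  simp only [sin_zero, cos_zero, sin_two_pi, cos_two_pi]
  ring

theorem cycle_average_sqrt_two_smul_sin_smul_add_cos_smul {ι : Type*} (u v : ι → ℝ) (i j : ι) :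
    (1 / (2 * π)) * ∫ θ in (0:ℝ)..2 * π,
        (√2 • (sin θ • u + cos θ • v)) i * (√2 • (sin θ • u + cos θ • v)) j
      = (vecMulVec u u + vecMulVec v v) i j := by
  have hsqrt : √2 * √2 = 2 := Real.mul_self_sqrt zero_le_two
  have hentry : ∀ θ : ℝ, (√2 • (sin θ • u + cos θ • v)) i * (√2 • (sin θ • u + cos θ • v)) j
      = 2 * ((u i * sin θ + v i * cos θ) * (u j * sin θ + v j * cos θ)) := by
    intro θ
    simp only [Pi.smul_apply, Pi.add_apply, smul_eq_mul]
    linear_combination (u i * sin θ + v i * cos θ) * (u j * sin θ + v j * cos θ) * hsqrt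
  simp_rw [hentry]
  rw [intervalIntegral.integral_const_mul, integral_sin_add_cos_mul_sin_add_cos]
  field_simp
  simp only [Matrix.add_apply, vecMulVec_apply]

theorem ahat_eq (ψ χ σ θ : ℝ) :
    ahat ψ χ σ θ = √2 • (sin θ • (-cos χ) • ![cos ψ, sin ψ]
      + cos θ • (σ * sin χ) • ![-sin ψ, cos ψ]) := by
  ext i
  fin_cases i <;>
    simp only [ahat, ahatX, ahatY, Pi.smul_apply, Pi.add_apply, cons_val_zero, cons_val_one,
      cons_val_fin_one, Fin.zero_eta, Fin.mk_one, Fin.isValue, smul_eq_mul] <;> ring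

theorem vecMulVec_cos_sin (ψ : ℝ) :
    vecMulVec ![cos ψ, sin ψ] ![cos ψ, sin ψ] = (1 / 2 : ℝ) • (1 + Mpol ψ) := by
  ext i j
  fin_cases i <;> fin_cases j <;>
    simp only [vecMulVec_apply, Mpol, Matrix.smul_apply, Matrix.add_apply,
      one_apply_eq, one_apply_ne, ne_eq, zero_ne_one, one_ne_zero, not_false_eq_true, of_apply,
      cons_val', cons_val_zero, cons_val_one, cons_val_fin_one, Fin.zero_eta, Fin.mk_one,
      Fin.isValue, smul_eq_mul] <;>
    linarith [sin_sq_add_cos_sq ψ, cos_two_mul ψ, sin_two_mul ψ]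

theorem vecMulVec_neg_sin_cos (ψ : ℝ) :
    vecMulVec ![-sin ψ, cos ψ] ![-sin ψ, cos ψ] = (1 / 2 : ℝ) • (1 - Mpol ψ) := by
  ext i j
  fin_cases i <;> fin_cases j <;>
    simp only [vecMulVec_apply, Mpol, Matrix.smul_apply, Matrix.sub_apply,
      one_apply_eq, one_apply_ne, ne_eq, zero_ne_one, one_ne_zero, not_false_eq_true, of_apply,
      cons_val', cons_val_zero, cons_val_one, cons_val_fin_one, Fin.zero_eta, Fin.mk_one,
      Fin.isValue, smul_eq_mul] <;>
    linarith [sin_sq_add_cos_sq ψ, cos_two_mul ψ, sin_two_mul ψ]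

/-- The cycle-averaged polarization dyadic (entrywise integral) equals the polarization
projector `P(ψ,χ) = ½ [I₂ + cos 2χ · M(ψ)]`, independently of the handedness `σ`. -/
theorem cycle_averaged_dyadic_eq_projector (ψ χ σ : ℝ) (hσ : σ = 1 ∨ σ = -1) :
    ∀ i j : Fin 2,
      (1 / (2 * π)) * ∫ θ in (0:ℝ)..(2 * π), ahat ψ χ σ θ i * ahat ψ χ σ θ j
        = ((1 / 2 : ℝ) • ((1 : Matrix (Fin 2) (Fin 2) ℝ) + cos (2 * χ) • Mpol ψ)) i j := by
  have hσ2 : σ * σ = 1 := by rcases hσ with rfl | rfl <;> norm_num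
  have hdyadic : vecMulVec ((-cos χ) • ![cos ψ, sin ψ]) ((-cos χ) • ![cos ψ, sin ψ])
      + vecMulVec ((σ * sin χ) • ![-sin ψ, cos ψ]) ((σ * sin χ) • ![-sin ψ, cos ψ])
      = (1 / 2 : ℝ) • ((1 : Matrix (Fin 2) (Fin 2) ℝ) + cos (2 * χ) • Mpol ψ) := by
    simp only [smul_vecMulVec, vecMulVec_smul, vecMulVec_cos_sin, vecMulVec_neg_sin_cos,
      cos_two_mul]
    match_scalars
    · linear_combination (sin χ ^ 2 / 2) * hσ2 + sin_sq_add_cos_sq χ / 2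
    · linear_combination -(sin χ ^ 2 / 2) * hσ2 - sin_sq_add_cos_sq χ / 2
  intro i j
  simp_rw [ahat_eq, cycle_average_sqrt_two_smul_sin_smul_add_cos_smul, hdyadic]

end
end
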